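/- arXiv:math/9702210 — 7 statements merged into one kernel-verified Lean document; each statement's English description precedes it below -/
import Mathlib

section
/- For 1 ≤ s ≤ r < ∞, the Mazur map φ(f) = |f|^{r/s} sign(f), restricted to the closed unit ball of L^r(μ), is uniformly continuous as a map into L^s(μ). -/
/-
With `P = r / s ≥ 1`, the Mazur map acts pointwise by `signedRpow P x = |x| ^ P * sign x`, and
Bernoulli's inequality gives
`|signedRpow P a - signedRpow P b| ≤ P (|a| ^ (P - 1) + |b| ^ (P - 1)) |a - b|`.
For `s < r`, Hölder's inequality with `1/s = 1/q + 1/r`, where `q (P - 1) = r`, turns this into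
`‖φ f - φ g‖_s ≤ P (‖f‖_r ^ (P - 1) + ‖g‖_r ^ (P - 1)) ‖f - g‖_r`,
so `φ` is `2P`-Lipschitz on the unit ball. For `s = r`, `φ` is the identity.
-/

open MeasureTheory ENNReal

noncomputable def signedRpow (P x : ℝ) : ℝ := |x| ^ P * Real.sign x

lemma signedRpow_of_nonneg {P x : ℝ} (hP : 0 < P) (hx : 0 ≤ x) : signedRpow P x = x ^ P := by
  rcases hx.eq_or_lt with rfl | hx
  · simp [signedRpow, Real.zero_rpow hP.ne']
  · rw [signedRpow, abs_of_pos hx, Real.sign_of_pos hx, mul_one]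

lemma signedRpow_neg (P x : ℝ) : signedRpow P (-x) = -signedRpow P x := by
  simp [signedRpow, Real.sign_neg]

lemma signedRpow_one (x : ℝ) : signedRpow 1 x = x := by
  rcases lt_trichotomy x 0 with hx | rfl | hx
  · rw [← neg_neg x, signedRpow_neg, signedRpow_of_nonneg one_pos (by linarith), Real.rpow_one]
  · simp [signedRpow]
  · rw [signedRpow_of_nonneg one_pos hx.le, Real.rpow_one]

lemma rpow_eq_rpow_sub_one_mul {P x : ℝ} (hP : P ≠ 0) (hx : 0 ≤ x) :
    x ^ P = x ^ (P - 1) * x := by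
  rw [← Real.rpow_add_one' hx (by rwa [sub_add_cancel]), sub_add_cancel]

lemma rpow_sub_rpow_le {P a b : ℝ} (hP : 1 ≤ P) (hb : 0 ≤ b) (hba : b ≤ a) :
    a ^ P - b ^ P ≤ P * a ^ (P - 1) * (a - b) := by
  rcases (hb.trans hba).eq_or_lt with rfl | ha
  · obtain rfl : b = 0 := le_antisymm hba hb
    simp
  have bernoulli : 1 + P * (b / a - 1) ≤ (b / a) ^ P := by
    simpa using one_add_mul_self_le_rpow_one_add (s := b / a - 1)
      (by linarith [div_nonneg hb ha.le]) hP
  rw [Real.div_rpow hb ha.le, le_div_iff₀ (Real.rpow_pos_of_pos ha P)] at bernoulli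
  have expand : (1 + P * (b / a - 1)) * (a ^ (P - 1) * a) =
      a ^ (P - 1) * a - P * a ^ (P - 1) * (a - b) := by
    field_simp
    ring
  rw [rpow_eq_rpow_sub_one_mul (by linarith) ha.le] at bernoulli ⊢
  linarith

lemma abs_signedRpow_sub_le_of_nonneg {P a b : ℝ} (hP : 1 ≤ P) (hb : 0 ≤ b) (hba : b ≤ a) :
    |signedRpow P a - signedRpow P b| ≤ P * (|a| ^ (P - 1) + |b| ^ (P - 1)) * |a - b| := by
  have ha := hb.trans hba
  rw [signedRpow_of_nonneg (by linarith) ha, signedRpow_of_nonneg (by linarith) hb,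
    abs_of_nonneg ha, abs_of_nonneg hb, abs_of_nonneg (sub_nonneg.2 hba),
    abs_of_nonneg (sub_nonneg.2 (Real.rpow_le_rpow hb hba (by linarith)))]
  have hB : 0 ≤ b ^ (P - 1) := Real.rpow_nonneg hb (P - 1)
  have hab : 0 ≤ a - b := sub_nonneg.2 hba
  have : 0 ≤ P * b ^ (P - 1) * (a - b) := by positivity
  linarith [rpow_sub_rpow_le hP hb hba]

lemma abs_signedRpow_sub_le_of_nonpos_of_nonneg {P a b : ℝ} (hP : 1 ≤ P) (hb : b ≤ 0)
    (ha : 0 ≤ a) :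
    |signedRpow P a - signedRpow P b| ≤ P * (|a| ^ (P - 1) + |b| ^ (P - 1)) * |a - b| := by
  have hb' : 0 ≤ -b := neg_nonneg.2 hb
  rw [← neg_neg b, signedRpow_neg, signedRpow_of_nonneg (by linarith) ha,
    signedRpow_of_nonneg (by linarith) hb', rpow_eq_rpow_sub_one_mul (by linarith) ha,
    rpow_eq_rpow_sub_one_mul (by linarith) hb', abs_neg, abs_of_nonneg ha,
    abs_of_nonneg hb', sub_neg_eq_add]
  have hA := Real.rpow_nonneg ha (P - 1)
  have hB := Real.rpow_nonneg hb' (P - 1)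
  rw [abs_of_nonneg (by positivity), abs_of_nonneg (by linarith)]
  nlinarith [mul_nonneg hA hb', mul_nonneg hB ha,
    mul_nonneg (mul_nonneg (sub_nonneg.2 hP) (add_nonneg hA hB)) (add_nonneg ha hb')]

lemma abs_signedRpow_sub_le {P : ℝ} (hP : 1 ≤ P) (a b : ℝ) :
    |signedRpow P a - signedRpow P b| ≤ P * (|a| ^ (P - 1) + |b| ^ (P - 1)) * |a - b| := by
  wlog hba : b ≤ a generalizing a b
  · rw [abs_sub_comm, abs_sub_comm a, add_comm]
    exact this b a (le_of_not_ge hba)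
  rcases le_total 0 b with hb | hb
  · exact abs_signedRpow_sub_le_of_nonneg hP hb hba
  rcases le_total 0 a with ha | ha
  · exact abs_signedRpow_sub_le_of_nonpos_of_nonneg hP hb ha
  · have := abs_signedRpow_sub_le_of_nonneg hP (neg_nonneg.2 ha) (neg_le_neg hba)
    rwa [signedRpow_neg, signedRpow_neg, abs_neg, abs_neg, neg_sub_neg, neg_sub_neg, add_comm,
      abs_sub_comm, abs_sub_comm (signedRpow P b)] at this

section

variable {Ω : Type*} [MeasurableSpace Ω] {μ : Measure Ω}

lemma eLpNorm_signedRpow_sub_le {p q t : ℝ≥0∞} [HolderTriple q p t] (ht : 1 ≤ t) {P : ℝ}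
    (hP : 1 ≤ P) {f g : Ω → ℝ} (hf : AEStronglyMeasurable f μ) (hg : AEStronglyMeasurable g μ) :
    eLpNorm (fun ω => signedRpow P (f ω) - signedRpow P (g ω)) t μ ≤
      ENNReal.ofReal P * (eLpNorm (fun ω => |f ω| ^ (P - 1)) q μ +
        eLpNorm (fun ω => |g ω| ^ (P - 1)) q μ) * eLpNorm (f - g) p μ := by
  have hpow {h : Ω → ℝ} (hh : AEStronglyMeasurable h μ) :
      AEStronglyMeasurable (fun ω => |h ω| ^ (P - 1)) μ :=
    ((Real.continuous_rpow_const (by linarith)).comp continuous_abs).comp_aestronglyMeasurable hh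
  set w : Ω → ℝ := fun ω => |f ω| ^ (P - 1) + |g ω| ^ (P - 1)
  have hw : AEStronglyMeasurable w μ := (hpow hf).add (hpow hg)
  calc eLpNorm (fun ω => signedRpow P (f ω) - signedRpow P (g ω)) t μ
      ≤ eLpNorm ((P • w) • (f - g)) t μ := by
        refine eLpNorm_mono fun ω => ?_
        have hw0 : 0 ≤ P * w ω := mul_nonneg (by linarith) (by positivity)
        simp only [Real.norm_eq_abs, Pi.smul_apply', Pi.smul_apply, Pi.sub_apply, smul_eq_mul,
          abs_mul, abs_of_nonneg hw0]
        exact abs_signedRpow_sub_le hP _ _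
    _ ≤ eLpNorm (P • w) q μ * eLpNorm (f - g) p μ :=
        eLpNorm_smul_le_mul_eLpNorm (hf.sub hg) (hw.const_smul P)
    _ ≤ ENNReal.ofReal P * (eLpNorm (fun ω => |f ω| ^ (P - 1)) q μ +
          eLpNorm (fun ω => |g ω| ^ (P - 1)) q μ) * eLpNorm (f - g) p μ := by
        rw [eLpNorm_const_smul, ← ofReal_norm, Real.norm_of_nonneg (by linarith)]
        gcongr
        exact eLpNorm_add_le (hpow hf) (hpow hg) (ht.trans (HolderTriple.le q p t))

lemma eLpNorm_abs_rpow_le_one {q : ℝ≥0∞} {a : ℝ} (ha : 0 < a) {f : Ω → ℝ}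
    (hf : eLpNorm f (q * ENNReal.ofReal a) μ ≤ 1) :
    eLpNorm (fun ω => |f ω| ^ a) q μ ≤ 1 := by
  have h := eLpNorm_norm_rpow f ha (p := q) (μ := μ)
  simp only [Real.norm_eq_abs] at h
  exact h ▸ ENNReal.rpow_le_one hf ha.le

lemma MeasureTheory.Lp.eLpNorm_le_one_of_mem_closedBall {p : ℝ≥0∞} [Fact (1 ≤ p)]
    {f : Lp ℝ p μ} (hf : f ∈ Metric.closedBall 0 1) : eLpNorm f p μ ≤ 1 := by
  rw [← Lp.enorm_def, ← ofReal_norm, ← ENNReal.ofReal_one]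
  exact ENNReal.ofReal_le_ofReal (mem_closedBall_zero_iff.1 hf)

end

section

variable {r s : ℝ}

lemma holderTriple_ofReal_mul_div_sub (hs : 0 < s) (hsr : s < r) :
    HolderTriple (ENNReal.ofReal (r * s / (r - s))) (ENNReal.ofReal r) (ENNReal.ofReal s) := by
  have hr : 0 < r := hs.trans hsr
  have hq : 0 < r * s / (r - s) := div_pos (mul_pos hr hs) (sub_pos.2 hsr)
  constructor
  rw [← ENNReal.ofReal_inv_of_pos hs, ← ENNReal.ofReal_inv_of_pos hr,
    ← ENNReal.ofReal_inv_of_pos hq, ← ENNReal.ofReal_add (inv_pos.2 hq).le (inv_pos.2 hr).le]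
  congr 1
  field_simp
  ring

lemma ofReal_mul_div_sub_mul_ofReal_div_sub_one (hs : 0 < s) (hsr : s < r) :
    ENNReal.ofReal (r * s / (r - s)) * ENNReal.ofReal (r / s - 1) = ENNReal.ofReal r := by
  have hrs : 0 < r - s := sub_pos.2 hsr
  rw [← ENNReal.ofReal_mul (div_pos (mul_pos (hs.trans hsr) hs) hrs).le]
  congr 1
  field_simp

end

/-- For `1 ≤ s ≤ r < ∞` the Mazur map is uniformly continuous on the unit ball of `L^r(μ)`. -/
theorem stmt_4 {Ω : Type*} [MeasurableSpace Ω] (μ : Measure Ω) (r s : ℝ)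
    (hs : 1 ≤ s) (hsr : s ≤ r)
    [Fact (1 ≤ ENNReal.ofReal r)] [Fact (1 ≤ ENNReal.ofReal s)]
    (φ : Lp ℝ (ENNReal.ofReal r) μ → Lp ℝ (ENNReal.ofReal s) μ)
    (hφ : ∀ f : Lp ℝ (ENNReal.ofReal r) μ,
      (φ f : Ω → ℝ) =ᵐ[μ] fun ω => |f ω| ^ (r / s) * Real.sign (f ω)) :
    UniformContinuousOn φ (Metric.closedBall 0 1) := by
  have hs0 : 0 < s := by linarith
  rcases hsr.eq_or_lt with rfl | hsr
  · obtain rfl : φ = id := funext fun f => Lp.ext <| (hφ f).trans <|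
      .of_forall fun ω => by rw [div_self hs0.ne']; exact signedRpow_one (f ω)
    exact uniformContinuous_id.uniformContinuousOn
  set P := r / s
  set q := ENNReal.ofReal (r * s / (r - s))
  have : HolderTriple q (ENNReal.ofReal r) (ENNReal.ofReal s) :=
    holderTriple_ofReal_mul_div_sub hs0 hsr
  have hP : 1 < P := (one_lt_div hs0).2 hsr
  have weight {f : Lp ℝ (ENNReal.ofReal r) μ} (hf : f ∈ Metric.closedBall 0 1) :
      eLpNorm (fun ω => |f ω| ^ (P - 1)) q μ ≤ 1 :=
    eLpNorm_abs_rpow_le_one (sub_pos.2 hP) <| by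
      rw [ofReal_mul_div_sub_mul_ofReal_div_sub_one hs0 hsr]
      exact Lp.eLpNorm_le_one_of_mem_closedBall hf
  refine LipschitzOnWith.uniformContinuousOn (K := Real.toNNReal (2 * P)) fun f hf g hg => ?_
  calc edist (φ f) (φ g)
      = eLpNorm (fun ω => signedRpow P (f ω) - signedRpow P (g ω)) (ENNReal.ofReal s) μ := by
        rw [Lp.edist_def]
        exact eLpNorm_congr_ae ((hφ f).sub (hφ g))
    _ ≤ ENNReal.ofReal P * (1 + 1) * edist f g := by
        rw [Lp.edist_def]
        grw [eLpNorm_signedRpow_sub_le (p := ENNReal.ofReal r) (q := q)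
          (ENNReal.one_le_ofReal.2 hs) hP.le (Lp.aestronglyMeasurable f)
          (Lp.aestronglyMeasurable g), weight hf, weight hg]
    _ = Real.toNNReal (2 * P) * edist f g := by
        rw [one_add_one_eq_two, mul_comm (ENNReal.ofReal P), ← ENNReal.ofReal_ofNat 2,
          ← ENNReal.ofReal_mul zero_le_two]
        rfl
end

section
/- The kernel K(x, y) = exp(-‖x - y‖²) on a real Hilbert space H is positive definite: for any finite collection of points x₁, …, xₙ ∈ H and real scalars c₁, …, cₙ, one has ∑ᵢ∑ⱼ cᵢ cⱼ K(xᵢ, xⱼ) ≥ 0. -/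
/-!
Expanding `‖x - y‖² = ‖x‖² - 2⟪x, y⟫ + ‖y‖²` writes the Gaussian kernel matrix as `D E D` with
`D` diagonal and `E = (exp (2⟪xᵢ, xⱼ⟫))ᵢⱼ`. The Gram matrix `(⟪xᵢ, xⱼ⟫)ᵢⱼ` is positive
semidefinite, hence so are its entrywise powers by the Schur product theorem, and so is `E`,
a convergent nonnegative combination of them by the exponential series.
-/

open Finset
open scoped ComplexOrder

theorem Real.exp_neg_norm_sub_sq {H : Type*} [NormedAddCommGroup H] [InnerProductSpace ℝ H]
    (x y : H) :
    exp (-‖x - y‖ ^ 2) = exp (-‖x‖ ^ 2) * exp (2 * inner ℝ x y) * exp (-‖y‖ ^ 2) := by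
  rw [← exp_add, ← exp_add, norm_sub_sq_real]
  ring_nf

namespace Matrix

variable {ι 𝕜 : Type*} [RCLike 𝕜]

theorem PosSemidef.map_pow {A : Matrix ι ι 𝕜} (hA : A.PosSemidef) :
    ∀ k : ℕ, (A.map (· ^ k)).PosSemidef
  | 0 => by
    refine ⟨?_, fun x => ?_⟩
    · ext; simp
    · simp only [map_apply, pow_zero, mul_one, Finsupp.sum, ← mul_sum, ← sum_mul, ← star_sum]
      exact star_mul_self_nonneg _
  | k + 1 => by
    convert (hA.map_pow k).hadamard hA using 1
    ext i j
    simp [pow_succ]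

theorem PosSemidef.map_exp [Fintype ι] {A : Matrix ι ι 𝕜} (hA : A.PosSemidef) :
    (A.map NormedSpace.exp).PosSemidef := by
  refine .of_dotProduct_mulVec_nonneg
    (hA.isHermitian.map _ fun z => (NormedSpace.star_exp z).symm) fun c => ?_
  have hsum : HasSum (fun k : ℕ => (k.factorial : 𝕜)⁻¹ * (star c ⬝ᵥ A.map (· ^ k) *ᵥ c))
      (star c ⬝ᵥ A.map NormedSpace.exp *ᵥ c) := by
    simp only [dotProduct, mulVec, mul_sum, map_apply]
    refine hasSum_sum fun i _ => hasSum_sum fun j _ => ?_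
    exact (((NormedSpace.exp_series_hasSum_exp' (𝕂 := 𝕜) (A i j)).mul_right (c j)).mul_left
      (star c i)).congr_fun fun k => by rw [smul_eq_mul]; ring
  exact hsum.nonneg fun k => mul_nonneg (by positivity) ((hA.map_pow k).dotProduct_mulVec_nonneg c)

theorem PosSemidef.sum_sum_mul_nonneg [Fintype ι] {A : Matrix ι ι ℝ} (hA : A.PosSemidef)
    (c : ι → ℝ) : 0 ≤ ∑ i, ∑ j, c i * c j * A i j := by
  refine (hA.dotProduct_mulVec_nonneg c).trans_eq ?_
  simp only [dotProduct, mulVec, mul_sum, star_trivial]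
  exact sum_congr rfl fun i _ => sum_congr rfl fun j _ => by ring

theorem posSemidef_exp_neg_norm_sub_sq {H : Type*} [NormedAddCommGroup H]
    [InnerProductSpace ℝ H] [Fintype ι] (x : ι → H) :
    (of fun i j => Real.exp (-‖x i - x j‖ ^ 2)).PosSemidef := by
  classical
  have hE : (((2 : ℝ) • gram ℝ x).map Real.exp).PosSemidef := by
    rw [Real.exp_eq_exp_ℝ]
    exact ((posSemidef_gram ℝ x).smul zero_le_two).map_exp
  convert hE.conjTranspose_mul_mul_same (diagonal fun i => Real.exp (-‖x i‖ ^ 2)) using 1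
  ext i j
  simp [Real.exp_neg_norm_sub_sq, gram_apply]

end Matrix

/-- The kernel `K(x,y) = exp (-‖x-y‖²)` is positive definite on a real inner product space. -/
theorem stmt_5 {H : Type*} [NormedAddCommGroup H] [InnerProductSpace ℝ H]
    (n : ℕ) (x : Fin n → H) (c : Fin n → ℝ) :
    0 ≤ ∑ i, ∑ j, c i * c j * Real.exp (-‖x i - x j‖ ^ 2) :=
  (Matrix.posSemidef_exp_neg_norm_sub_sq x).sum_sum_mul_nonneg c
end

section
/- Let f : X → Y be a bi-Lipschitz bijection between normed spaces with ‖f⁻¹ u - f⁻¹ v‖ ≤ L‖u - v‖ for all u, v ∈ Y. If f is ε-Fréchet differentiable at a point x₀ with associated bounded linear operator T, and ε < 1/L, then T is a linear isomorphism from X onto Y; in particular, ‖T u‖ ≥ (1/L - ε)‖u‖ for all u ∈ X, and T has dense range, hence (being bounded below) is surjective when X is a Banach space. -/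
open NNReal

/-!
Near `x₀` the map `f` is `ε`-close to the affine map `x₀ + u ↦ f x₀ + T u`, and `ε < 1/L` leaves
room for the co-Lipschitz bound `‖u‖ ≤ L ‖f (x₀ + u) - f x₀‖` to survive the error: this gives
`(1/L - ε) ‖u‖ ≤ ‖T u‖`, so `T` is injective with closed range. Pulling back small `y` through `f`
shows that every `y` lies within `L ε ‖y‖` of the range of `T`; as `L ε < 1`, Riesz's lemma forbids
the closed range from being a proper subspace.
-/

theorem forall_of_forall_norm_le_of_smul_imp {E : Type*} [NormedAddCommGroup E]
    [NormedSpace ℝ E] {P : E → Prop} (hP : ∀ t : ℝ, 0 < t → ∀ y, P (t • y) → P y)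
    {ρ : ℝ} (hρ : 0 < ρ) (hball : ∀ y, ‖y‖ ≤ ρ → P y) (y : E) : P y := by
  have ht : 0 < ρ / (‖y‖ + 1) := by positivity
  refine hP _ ht y (hball _ ?_)
  rw [norm_smul, Real.norm_of_nonneg ht.le, div_mul_eq_mul_div, div_le_iff₀ (by positivity)]
  nlinarith

theorem Submodule.eq_top_of_forall_exists_norm_sub_le {𝕜 E : Type*} [NontriviallyNormedField 𝕜]
    [NormedAddCommGroup E] [NormedSpace 𝕜 E] {F : Submodule 𝕜 E} (hF : IsClosed (F : Set E))
    {c : ℝ} (hc : c < 1) (happrox : ∀ y, ∃ x ∈ F, ‖x - y‖ ≤ c * ‖y‖) : F = ⊤ := by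
  rw [eq_top_iff']
  by_contra! hne
  obtain ⟨r, hcr, hr⟩ := exists_between hc
  obtain ⟨y, hyF, hfar⟩ := riesz_lemma hF hne hr
  obtain ⟨x, hxF, hxy⟩ := happrox y
  have hy : ‖y‖ ≤ 0 := by
    have := hfar x hxF
    rw [norm_sub_rev] at this
    nlinarith [norm_nonneg y]
  exact hyF (norm_le_zero_iff.mp hy ▸ F.zero_mem)

namespace ContinuousLinearMap

variable {X Y : Type*} [NormedAddCommGroup X] [NormedSpace ℝ X]
  [NormedAddCommGroup Y] [NormedSpace ℝ Y]

theorem mul_norm_le_norm_of_forall_norm_le (T : X →L[ℝ] Y) {a δ : ℝ} (hδ : 0 < δ)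
    (h : ∀ u, ‖u‖ ≤ δ → a * ‖u‖ ≤ ‖T u‖) (u : X) : a * ‖u‖ ≤ ‖T u‖ := by
  refine forall_of_forall_norm_le_of_smul_imp (fun t ht v hv => ?_) hδ h u
  rw [map_smul, norm_smul, norm_smul, Real.norm_of_nonneg ht.le, mul_left_comm] at hv
  exact le_of_mul_le_mul_left hv ht

theorem surjective_of_isClosed_range_of_forall_norm_le (T : X →L[ℝ] Y)
    (hT : IsClosed (Set.range T)) {c ρ : ℝ} (hc : c < 1) (hρ : 0 < ρ)
    (happrox : ∀ y, ‖y‖ ≤ ρ → ∃ x, ‖T x - y‖ ≤ c * ‖y‖) : Function.Surjective T := by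
  have hscale : ∀ t : ℝ, 0 < t → ∀ y : Y, (∃ x, ‖T x - t • y‖ ≤ c * ‖t • y‖) →
      ∃ x, ‖T x - y‖ ≤ c * ‖y‖ := by
    rintro t ht y ⟨x, hx⟩
    refine ⟨t⁻¹ • x, ?_⟩
    have hsub : T x - t • y = t • (T (t⁻¹ • x) - y) := by
      rw [smul_sub, map_smul, smul_smul, mul_inv_cancel₀ ht.ne', one_smul]
    rw [hsub, norm_smul, norm_smul, Real.norm_of_nonneg ht.le, mul_left_comm] at hx
    exact le_of_mul_le_mul_left hx ht
  have hT' : IsClosed (LinearMap.range (T : X →ₗ[ℝ] Y) : Set Y) := by rwa [LinearMap.coe_range]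
  refine LinearMap.range_eq_top.mp (Submodule.eq_top_of_forall_exists_norm_sub_le hT' hc ?_)
  intro y
  obtain ⟨x, hx⟩ := forall_of_forall_norm_le_of_smul_imp hscale hρ happrox y
  exact ⟨T x, LinearMap.mem_range_self _ x, hx⟩

end ContinuousLinearMap

theorem norm_sub_le_mul_norm_sub_of_invFun {X Y : Type*} [NormedAddCommGroup X]
    [NormedAddCommGroup Y] {f : X → Y} (hf : Function.Injective f) {L : ℝ}
    (hinv : ∀ u v : Y, ‖Function.invFun f u - Function.invFun f v‖ ≤ L * ‖u - v‖) (x x' : X) :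
    ‖x - x'‖ ≤ L * ‖f x - f x'‖ := by
  simpa only [Function.leftInverse_invFun hf _] using hinv (f x) (f x')

section CoLipschitz

variable {X Y : Type*} [NormedAddCommGroup X] [NormedSpace ℝ X]
  [NormedAddCommGroup Y] [NormedSpace ℝ Y]
  {f : X → Y} {L : ℝ} {x₀ : X} {T : X →L[ℝ] Y} {ε δ : ℝ}

theorem sub_mul_norm_le_norm_of_coLipschitz (hL : 0 < L)
    (hco : ∀ x x', ‖x - x'‖ ≤ L * ‖f x - f x'‖)
    (hdiff : ∀ u : X, ‖u‖ ≤ δ → ‖f (x₀ + u) - f x₀ - T u‖ ≤ ε * ‖u‖) {u : X} (hu : ‖u‖ ≤ δ) :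
    (1 / L - ε) * ‖u‖ ≤ ‖T u‖ := by
  have hfu : ‖u‖ ≤ L * (‖T u‖ + ε * ‖u‖) := calc
    ‖u‖ ≤ L * ‖f (x₀ + u) - f x₀‖ := by simpa only [add_sub_cancel_left] using hco (x₀ + u) x₀
    _ ≤ L * (‖T u‖ + ‖f (x₀ + u) - f x₀ - T u‖) := by gcongr; exact norm_le_norm_add_norm_sub' _ _
    _ ≤ L * (‖T u‖ + ε * ‖u‖) := by gcongr; exact hdiff u hu
  rw [← mul_le_mul_iff_of_pos_left hL]
  field_simp
  linarith

theorem exists_norm_sub_le_of_coLipschitz (hf : Function.Surjective f) (hL : 0 < L)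
    (hco : ∀ x x', ‖x - x'‖ ≤ L * ‖f x - f x'‖)
    (hdiff : ∀ u : X, ‖u‖ ≤ δ → ‖f (x₀ + u) - f x₀ - T u‖ ≤ ε * ‖u‖) {y : Y}
    (hy : ‖y‖ ≤ δ / L) : ∃ x, ‖T x - y‖ ≤ L * max ε 0 * ‖y‖ := by
  obtain ⟨z, hz⟩ := hf (f x₀ + y)
  have hx : ‖z - x₀‖ ≤ L * ‖y‖ := by simpa only [hz, add_sub_cancel_left] using hco z x₀
  have hxδ : ‖z - x₀‖ ≤ δ := hx.trans (by rwa [le_div_iff₀' hL] at hy)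
  refine ⟨z - x₀, ?_⟩
  calc ‖T (z - x₀) - y‖ = ‖f (x₀ + (z - x₀)) - f x₀ - T (z - x₀)‖ := by
        rw [add_sub_cancel, hz, add_sub_cancel_left, norm_sub_rev]
    _ ≤ ε * ‖z - x₀‖ := hdiff _ hxδ
    _ ≤ max ε 0 * (L * ‖y‖) := by gcongr; exact le_max_left ε 0
    _ = L * max ε 0 * ‖y‖ := by ring

end CoLipschitz

theorem stmt_6_general {X Y : Type*} [NormedAddCommGroup X] [NormedSpace ℝ X] [CompleteSpace X]
    [NormedAddCommGroup Y] [NormedSpace ℝ Y]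
    (f : X → Y) (hbij : Function.Bijective f)
    (L : ℝ) (hL : 0 < L)
    (hinv : ∀ u v : Y, ‖Function.invFun f u - Function.invFun f v‖ ≤ L * ‖u - v‖)
    (x₀ : X) (T : X →L[ℝ] Y) (ε : ℝ) (hε : ε < 1 / L)
    (δ : ℝ) (hδ : 0 < δ)
    (hdiff : ∀ u : X, ‖u‖ ≤ δ → ‖f (x₀ + u) - f x₀ - T u‖ ≤ ε * ‖u‖) :
    (∀ u : X, (1 / L - ε) * ‖u‖ ≤ ‖T u‖) ∧ DenseRange T ∧ Function.Bijective T := by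
  have hco := norm_sub_le_mul_norm_sub_of_invFun hbij.injective hinv
  have hlower : ∀ u, (1 / L - ε) * ‖u‖ ≤ ‖T u‖ := T.mul_norm_le_norm_of_forall_norm_le hδ
    fun u hu => sub_mul_norm_le_norm_of_coLipschitz hL hco hdiff hu
  have hgap : 0 < 1 / L - ε := sub_pos.mpr hε
  have hanti : AntilipschitzWith (Real.toNNReal (1 / L - ε)⁻¹) T := by
    refine T.antilipschitz_of_bound fun u => ?_
    rw [Real.coe_toNNReal _ (inv_nonneg.mpr hgap.le), inv_mul_eq_div, le_div_iff₀ hgap, mul_comm]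
    exact hlower u
  have hcontract : L * max ε 0 < 1 := by
    rcases le_total ε 0 with hε₀ | hε₀
    · simp [max_eq_right hε₀]
    · rwa [max_eq_left hε₀, ← lt_div_iff₀' hL]
  have hsurj : Function.Surjective T :=
    T.surjective_of_isClosed_range_of_forall_norm_le (hanti.isClosed_range T.uniformContinuous)
      hcontract (div_pos hδ hL) fun y hy =>
        exists_norm_sub_le_of_coLipschitz hbij.surjective hL hco hdiff hy
  exact ⟨hlower, hsurj.denseRange, hanti.injective, hsurj⟩

/-- If a bi-Lipschitz bijection between Banach spaces is `ε`-Fréchet differentiable at a point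
with operator `T` and `ε < 1/L`, then `T` is an isomorphism onto `Y`. -/
theorem stmt_6 {X Y : Type*} [NormedAddCommGroup X] [NormedSpace ℝ X] [CompleteSpace X]
    [NormedAddCommGroup Y] [NormedSpace ℝ Y] [CompleteSpace Y]
    (f : X → Y) (hbij : Function.Bijective f)
    (Kf : ℝ≥0) (hf : LipschitzWith Kf f)
    (L : ℝ) (hL : 0 < L)
    (hinv : ∀ u v : Y, ‖Function.invFun f u - Function.invFun f v‖ ≤ L * ‖u - v‖)
    (x₀ : X) (T : X →L[ℝ] Y) (ε : ℝ) (hε : ε < 1 / L)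
    (δ : ℝ) (hδ : 0 < δ)
    (hdiff : ∀ u : X, ‖u‖ ≤ δ → ‖f (x₀ + u) - f x₀ - T u‖ ≤ ε * ‖u‖) :
    (∀ u : X, (1 / L - ε) * ‖u‖ ≤ ‖T u‖) ∧ DenseRange T ∧ Function.Bijective T :=
  stmt_6_general f hbij L hL hinv x₀ T ε hε δ hδ hdiff
end

section
/- If f is a Lipschitz quotient map from a Banach space X onto a Banach space Y that is ε-Fréchet differentiable at a point x₀ with operator T and co-Lipschitz constant λ, and ε < λ, then T is a linear quotient map: the closed unit ball of Y is contained in (λ - ε)⁻¹ · closure of T(unit ball of X); in particular T is surjective. -/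
open NNReal Pointwise Filter Topology Metric

/-!
Differentiability with error `ε` turns the co-Lipschitz property at `x₀`, on the scale `δ`, into
an approximation property of `T`: every vector of norm `< λ` lies within `ε` of `T (B_X)`. By
Banach's successive approximation scheme, which needs the completeness of `X`, this makes
`T (B_X)` contain the open ball of radius `λ - ε`; its closure then contains the closed one.
When `ε < 0` the hypotheses force `X`, hence `Y`, to be trivial.
-/

section SuccessiveApproximation

variable {𝕜 X Y : Type*} [NontriviallyNormedField 𝕜]
  [NormedAddCommGroup X] [NormedSpace 𝕜 X] [NormedAddCommGroup Y] [NormedSpace 𝕜 Y]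

theorem ContinuousLinearMap.exists_preimage_norm_le_of_approx [CompleteSpace X] (T : X →L[𝕜] Y)
    {C r : ℝ} (hC : 0 ≤ C) (hr₀ : 0 ≤ r) (hr : r < 1)
    (h : ∀ y, ∃ x, ‖x‖ ≤ C * ‖y‖ ∧ ‖y - T x‖ ≤ r * ‖y‖) (y : Y) :
    ∃ x, T x = y ∧ ‖x‖ ≤ C / (1 - r) * ‖y‖ := by
  choose g hg using h
  -- `e^[n] y` is the part of `y` that still has no preimage after `n` corrections
  let e : Y → Y := fun y => y - T (g y)
  have he : ∀ n : ℕ, ‖e^[n] y‖ ≤ r ^ n * ‖y‖ := by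
    intro n
    induction n with
    | zero => simp
    | succ n ih =>
      rw [Function.iterate_succ_apply', pow_succ', mul_assoc]
      exact (hg _).2.trans (mul_le_mul_of_nonneg_left ih hr₀)
  let u : ℕ → X := fun n => g (e^[n] y)
  have hu : ∀ n, ‖u n‖ ≤ C * ‖y‖ * r ^ n := fun n =>
    calc ‖u n‖ ≤ C * ‖e^[n] y‖ := (hg _).1
      _ ≤ C * (r ^ n * ‖y‖) := mul_le_mul_of_nonneg_left (he n) hC
      _ = C * ‖y‖ * r ^ n := by ring
  have hgeom : Summable fun n => C * ‖y‖ * r ^ n :=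
    (summable_geometric_of_lt_one hr₀ hr).mul_left _
  have hsum : Summable fun n => ‖u n‖ := .of_nonneg_of_le (fun _ => norm_nonneg _) hu hgeom
  have hTu : ∀ n, ∑ i ∈ Finset.range n, T (u i) = y - e^[n] y := by
    intro n
    induction n with
    | zero => simp
    | succ n ih =>
      rw [Finset.sum_range_succ, ih, Function.iterate_succ_apply']
      exact sub_add _ _ _
  refine ⟨∑' n, u n, tendsto_nhds_unique (T.hasSum hsum.of_norm.hasSum).tendsto_sum_nat ?_, ?_⟩
  · simp only [hTu]
    have hlim : Tendsto (fun n => r ^ n * ‖y‖) atTop (𝓝 0) := by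
      simpa using (tendsto_pow_atTop_nhds_zero_of_lt_one hr₀ hr).mul_const ‖y‖
    simpa using tendsto_const_nhds.sub (squeeze_zero_norm he hlim)
  · calc ‖∑' n, u n‖ ≤ ∑' n, ‖u n‖ := norm_tsum_le_tsum_norm hsum
      _ ≤ ∑' n, C * ‖y‖ * r ^ n := hsum.tsum_le_tsum hu hgeom
      _ = C / (1 - r) * ‖y‖ := by
        rw [_root_.tsum_mul_left, tsum_geometric_of_lt_one hr₀ hr]; ring

end SuccessiveApproximation

section Real

variable {X Y : Type*} [NormedAddCommGroup X] [NormedSpace ℝ X]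
  [NormedAddCommGroup Y] [NormedSpace ℝ Y]

theorem ContinuousLinearMap.exists_approx_preimage_norm_le_of_approx_on_sphere (T : X →L[ℝ] Y)
    {a ε : ℝ} (ha : 0 < a) (h : ∀ v : Y, ‖v‖ = a → ∃ u, ‖u‖ ≤ 1 ∧ ‖v - T u‖ ≤ ε) (y : Y) :
    ∃ x, ‖x‖ ≤ a⁻¹ * ‖y‖ ∧ ‖y - T x‖ ≤ ε / a * ‖y‖ := by
  rcases eq_or_ne y 0 with rfl | hy
  · exact ⟨0, by simp⟩
  have hy' : 0 < ‖y‖ := norm_pos_iff.2 hy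
  set t := ‖y‖ / a with ht_def
  have ht : 0 < t := div_pos hy' ha
  obtain ⟨u, hu, hTu⟩ := h (t⁻¹ • y) (by
    rw [norm_smul, Real.norm_of_nonneg (inv_nonneg.2 ht.le), ht_def, inv_div,
      div_mul_cancel₀ _ hy'.ne'])
  have hyx : y - T (t • u) = t • (t⁻¹ • y - T u) := by
    rw [map_smul, smul_sub, smul_smul, mul_inv_cancel₀ ht.ne', one_smul]
  refine ⟨t • u, ?_, ?_⟩
  · rw [norm_smul, Real.norm_of_nonneg ht.le]
    calc t * ‖u‖ ≤ t := mul_le_of_le_one_right ht.le hu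
      _ = a⁻¹ * ‖y‖ := by rw [ht_def, div_eq_inv_mul]
  · rw [hyx, norm_smul, Real.norm_of_nonneg ht.le]
    calc t * ‖t⁻¹ • y - T u‖ ≤ t * ε := mul_le_mul_of_nonneg_left hTu ht.le
      _ = ε / a * ‖y‖ := by rw [ht_def]; ring

theorem ContinuousLinearMap.ball_subset_image_closedBall_of_approx [CompleteSpace X]
    (T : X →L[ℝ] Y) {a ε : ℝ} (hε : 0 ≤ ε)
    (h : ∀ v : Y, ‖v‖ < a → ∃ u, ‖u‖ ≤ 1 ∧ ‖v - T u‖ ≤ ε) :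
    ball (0 : Y) (a - ε) ⊆ T '' closedBall 0 1 := by
  intro y hy
  rw [mem_ball_zero_iff] at hy
  rcases eq_or_ne y 0 with rfl | hy0
  · exact ⟨0, by simp⟩
  have hy0' : 0 < ‖y‖ := norm_pos_iff.2 hy0
  have hb : 0 < ‖y‖ + ε := by linarith
  obtain ⟨x, hTx, hx⟩ := T.exists_preimage_norm_le_of_approx (inv_nonneg.2 hb.le)
    (div_nonneg hε hb.le) ((div_lt_one hb).2 (by linarith))
    (T.exists_approx_preimage_norm_le_of_approx_on_sphere hb fun v hv => h v (by linarith)) y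
  refine ⟨x, ?_, hTx⟩
  rw [mem_closedBall_zero_iff]
  convert hx using 1
  rw [one_sub_div hb.ne', add_sub_cancel_right]
  field_simp

theorem exists_approx_preimage_of_ball_subset_image {f : X → Y} {T : X →L[ℝ] Y} {x₀ : X}
    {lam ε δ : ℝ} (hδ : 0 < δ) (hε : 0 ≤ ε) (hco : ball (f x₀) (lam * δ) ⊆ f '' ball x₀ δ)
    (hdiff : ∀ u : X, ‖u‖ ≤ δ → ‖f (x₀ + u) - f x₀ - T u‖ ≤ ε * ‖u‖) {v : Y} (hv : ‖v‖ < lam) :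
    ∃ u, ‖u‖ ≤ 1 ∧ ‖v - T u‖ ≤ ε := by
  obtain ⟨x, hx, hfx⟩ := hco (show f x₀ + δ • v ∈ ball (f x₀) (lam * δ) by
    rw [mem_ball, dist_eq_norm, add_sub_cancel_left, norm_smul, Real.norm_of_nonneg hδ.le]
    nlinarith)
  rw [mem_ball, dist_eq_norm] at hx
  have hw := hdiff (x - x₀) hx.le
  rw [add_sub_cancel, hfx, add_sub_cancel_left] at hw
  refine ⟨δ⁻¹ • (x - x₀), ?_, ?_⟩
  · rw [norm_smul, Real.norm_of_nonneg (inv_nonneg.2 hδ.le), inv_mul_le_one₀ hδ]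
    exact hx.le
  · have hvx : v - T (δ⁻¹ • (x - x₀)) = δ⁻¹ • (δ • v - T (x - x₀)) := by
      rw [map_smul, smul_sub, smul_smul, inv_mul_cancel₀ hδ.ne', one_smul]
    rw [hvx, norm_smul, Real.norm_of_nonneg (inv_nonneg.2 hδ.le), inv_mul_le_iff₀ hδ]
    nlinarith

theorem subsingleton_of_norm_le_neg_mul {F : Type*} [SeminormedAddCommGroup F] {g : X → F}
    {ε δ : ℝ} (hε : ε < 0) (hδ : 0 < δ) (h : ∀ u, ‖u‖ ≤ δ → ‖g u‖ ≤ ε * ‖u‖) :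
    Subsingleton X := by
  by_contra hX
  rw [not_subsingleton_iff_nontrivial] at hX
  obtain ⟨u, hu⟩ := exists_norm_eq X hδ.le
  have := (norm_nonneg _).trans (h u hu.le)
  rw [hu] at this
  nlinarith

theorem closedBall_subset_inv_smul_closure_of_ball_subset {r : ℝ} {s : Set X} (hr : 0 < r)
    (h : ball 0 r ⊆ s) : closedBall (0 : X) 1 ⊆ r⁻¹ • closure s := by
  rw [Set.subset_smul_set_iff₀ (inv_ne_zero hr.ne'), inv_inv,
    _root_.smul_closedBall _ _ zero_le_one, smul_zero, Real.norm_of_nonneg hr.le, mul_one,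
    ← closure_ball 0 hr.ne']
  exact closure_mono h

theorem ContinuousLinearMap.surjective_of_ball_subset_image (T : X →L[ℝ] Y) {r : ℝ} {s : Set X}
    (hr : 0 < r) (h : ball 0 r ⊆ T '' s) : Function.Surjective T := by
  refine LinearMap.range_eq_top.1
    (Submodule.eq_top_of_nonempty_interior' (LinearMap.range (T : X →ₗ[ℝ] Y)) ⟨0, ?_⟩)
  refine mem_interior.2 ⟨ball 0 r, fun y hy => ?_, isOpen_ball, mem_ball_self hr⟩
  obtain ⟨x, -, rfl⟩ := h hy
  exact ⟨x, rfl⟩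

end Real

theorem Function.surjective_of_ball_subset_image {α β : Type*} [PseudoMetricSpace α]
    [PseudoMetricSpace β] {f : α → β} {lam : ℝ} (hlam : 0 < lam) (x : α)
    (h : ∀ r, 0 < r → ball (f x) (lam * r) ⊆ f '' ball x r) : Function.Surjective f := by
  intro y
  obtain ⟨z, -, hz⟩ := h ((dist y (f x) + 1) / lam) (by positivity)
    (by rw [mem_ball, mul_div_cancel₀ _ hlam.ne']; linarith)
  exact ⟨z, hz⟩

theorem stmt_7_general {X Y : Type*} [NormedAddCommGroup X] [NormedSpace ℝ X] [CompleteSpace X]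
    [NormedAddCommGroup Y] [NormedSpace ℝ Y]
    (f : X → Y)
    (lam : ℝ) (hlam : 0 < lam)
    (hco : ∀ (x : X) (r : ℝ), 0 < r → Metric.ball (f x) (lam * r) ⊆ f '' Metric.ball x r)
    (x₀ : X) (T : X →L[ℝ] Y) (ε : ℝ) (hε : ε < lam)
    (δ : ℝ) (hδ : 0 < δ)
    (hdiff : ∀ u : X, ‖u‖ ≤ δ → ‖f (x₀ + u) - f x₀ - T u‖ ≤ ε * ‖u‖) :
    Metric.closedBall (0 : Y) 1 ⊆
      (lam - ε)⁻¹ • closure (T '' Metric.closedBall (0 : X) 1) ∧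
    Function.Surjective T := by
  have hball : ball (0 : Y) (lam - ε) ⊆ T '' closedBall 0 1 := by
    rcases lt_or_ge ε 0 with hε0 | hε0
    · have : Subsingleton X := subsingleton_of_norm_le_neg_mul hε0 hδ hdiff
      have : Subsingleton Y :=
        (Function.surjective_of_ball_subset_image hlam x₀ (hco x₀)).subsingleton
      exact fun y _ => ⟨0, by simp, Subsingleton.elim _ _⟩
    · exact T.ball_subset_image_closedBall_of_approx hε0 fun v hv =>
        exists_approx_preimage_of_ball_subset_image hδ hε0 (hco x₀ δ hδ) hdiff hv
  have hlamε : 0 < lam - ε := sub_pos.2 hε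
  exact ⟨closedBall_subset_inv_smul_closure_of_ball_subset hlamε hball,
    T.surjective_of_ball_subset_image hlamε hball⟩

/-- A Lipschitz quotient map that is `ε`-Fréchet differentiable at a point with `ε < λ`
has a differential that is a linear quotient map. -/
theorem stmt_7 {X Y : Type*} [NormedAddCommGroup X] [NormedSpace ℝ X] [CompleteSpace X]
    [NormedAddCommGroup Y] [NormedSpace ℝ Y] [CompleteSpace Y]
    (f : X → Y) (K : ℝ≥0) (hf : LipschitzWith K f)
    (lam : ℝ) (hlam : 0 < lam)
    (hco : ∀ (x : X) (r : ℝ), 0 < r → Metric.ball (f x) (lam * r) ⊆ f '' Metric.ball x r)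
    (x₀ : X) (T : X →L[ℝ] Y) (ε : ℝ) (hε : ε < lam)
    (δ : ℝ) (hδ : 0 < δ)
    (hdiff : ∀ u : X, ‖u‖ ≤ δ → ‖f (x₀ + u) - f x₀ - T u‖ ≤ ε * ‖u‖) :
    Metric.closedBall (0 : Y) 1 ⊆
      (lam - ε)⁻¹ • closure (T '' Metric.closedBall (0 : X) 1) ∧
    Function.Surjective T :=
  stmt_7_general f lam hlam hco x₀ T ε hε δ hδ hdiff
end

section
/- A countable union of Haar-null Borel sets in a separable Banach space is Haar-null: if A₁, A₂, … are Borel sets each admitting a Borel probability measure μₙ with μₙ(x + Aₙ) = 0 for all x, then there exists a single Borel probability measure μ with μ(x + ⋃ₙ Aₙ) = 0 for all x ∈ X. -/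
/-!
Each `μ n` can be replaced by a probability measure `m n` concentrated on the ball of radius
`2⁻ⁿ`: condition `μ n` on a small ball of positive mass and translate it to the origin. For
independent `Yₙ` with laws `m n` the series `∑ Yₙ` then converges, and its law `ν` factors as
`m k ∗ ρₖ` for every `k`, with `ρₖ` the law of `∑_{n ≠ k} Yₙ`. By Fubini a convolution `m ∗ ρ`
annihilates every translate of a set whose translates `m` annihilates, so `ν` annihilates every
translate of every `A k`.
-/
open MeasureTheory ProbabilityTheory Set Metric TopologicalSpace

section Translates

variable {X : Type*} [AddCommGroup X]

lemma preimage_add_left_image_add_left (a x : X) (A : Set X) :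
    (a + ·) ⁻¹' ((x + ·) '' A) = ((x - a) + ·) '' A := by
  ext y
  simp only [mem_preimage, image_add_left, neg_sub]
  rw [← add_assoc, neg_add_eq_sub]

variable [MeasurableSpace X]

lemma measurableSet_image_add_left [MeasurableAdd X] {A : Set X} (hA : MeasurableSet A) (x : X) :
    MeasurableSet ((x + ·) '' A) := by
  rw [image_add_left]
  exact measurable_const_add _ hA

lemma map_add_left_image_add_left_eq_zero [MeasurableAdd X] {μ : Measure X} {A : Set X}
    (hA : MeasurableSet A) (hμ : ∀ x, μ ((x + ·) '' A) = 0) (a x : X) :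
    μ.map (a + ·) ((x + ·) '' A) = 0 := by
  rw [Measure.map_apply (measurable_const_add a) (measurableSet_image_add_left hA x),
    preimage_add_left_image_add_left, hμ]

lemma conv_image_add_left_eq_zero [MeasurableAdd₂ X] {μ ν : Measure X} [SFinite μ] [SFinite ν]
    {A : Set X} (hA : MeasurableSet A) (hμ : ∀ x, μ ((x + ·) '' A) = 0) (x : X) :
    (μ ∗ ν) ((x + ·) '' A) = 0 := by
  have hB := measurableSet_image_add_left hA x
  rw [Measure.conv, Measure.map_apply measurable_add hB,
    Measure.prod_apply_symm (measurable_add hB)]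
  have hslice : ∀ y, (fun a => (a, y)) ⁻¹' ((fun p : X × X => p.1 + p.2) ⁻¹' ((x + ·) '' A)) =
      (y + ·) ⁻¹' ((x + ·) '' A) := fun y => by ext a; simp [add_comm]
  simp only [hslice, preimage_add_left_image_add_left, hμ, lintegral_zero]

end Translates

lemma exists_isProbabilityMeasure_ae_norm_le {X : Type*} [NormedAddCommGroup X] [SeparableSpace X]
    [MeasurableSpace X] [BorelSpace X] {μ : Measure X} [IsFiniteMeasure μ] (hμ0 : μ ≠ 0)
    {A : Set X} (hA : MeasurableSet A) (hμ : ∀ x, μ ((x + ·) '' A) = 0) {ε : ℝ} (hε : 0 < ε) :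
    ∃ m : Measure X, IsProbabilityMeasure m ∧ (∀ᵐ y ∂m, ‖y‖ ≤ ε) ∧
      ∀ x, m ((x + ·) '' A) = 0 := by
  obtain ⟨c, hc⟩ := μ.nonempty_support hμ0
  have hball : μ (closedBall c ε) ≠ 0 :=
    ((μ.mem_support_iff_forall c).1 hc _ (closedBall_mem_nhds c hε)).ne'
  have := cond_isProbabilityMeasure (s := closedBall c ε) hball
  refine ⟨μ[|closedBall c ε].map (-c + ·),
    Measure.isProbabilityMeasure_map (measurable_const_add _).aemeasurable, ?_,
    map_add_left_image_add_left_eq_zero hA (fun x => cond_absolutelyContinuous (hμ x)) _⟩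
  rw [ae_map_iff (measurable_const_add _).aemeasurable
    (measurableSet_le measurable_norm measurable_const)]
  filter_upwards [ae_cond_mem measurableSet_closedBall] with y hy
  rwa [neg_add_eq_sub, ← dist_eq_norm]

lemma indepFun_eval_update_infinitePi {ι : Type*} [DecidableEq ι] {X : ι → Type*}
    [∀ i, MeasurableSpace (X i)] (μ : ∀ i, Measure (X i)) [∀ i, IsProbabilityMeasure (μ i)]
    (k : ι) (c : X k) :
    IndepFun (fun ω : ∀ i, X i => ω k) (Function.update · k c) (Measure.infinitePi μ) := by
  let 𝓕 (s : Set ι) : MeasurableSpace (∀ i, X i) :=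
    ⨆ i ∈ s, MeasurableSpace.comap (fun ω => ω i) inferInstance
  have h : Indep (𝓕 {k}) (𝓕 {k}ᶜ) (Measure.infinitePi μ) :=
    indep_iSup_of_disjoint (fun i => (measurable_pi_apply i).comap_le)
      (iIndepFun_infinitePi (P := μ) (X := fun _ x => x) fun _ => measurable_id).iIndep
      (disjoint_singleton_left.2 (notMem_compl_iff.2 rfl))
  have hupdate : Measurable[𝓕 {k}ᶜ] (Function.update · k c) := by
    refine @measurable_pi_lambda _ _ _ (𝓕 {k}ᶜ) _ _ fun i => ?_
    rcases eq_or_ne i k with rfl | hik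
    · simp only [Function.update_self]; exact measurable_const
    · simp only [Function.update_of_ne hik]
      exact Measurable.mono (comap_measurable _) (le_iSup₂_of_le i hik le_rfl) le_rfl
  exact indep_of_indep_of_le_right (indep_of_indep_of_le_left h (le_iSup₂_of_le k rfl le_rfl))
    hupdate.comap_le

section Series

variable {X : Type*} [NormedAddCommGroup X] [SeparableSpace X] [MeasurableSpace X] [BorelSpace X]
  {t : ℕ → X → X}

lemma measurable_tsum_apply_eval (ht : ∀ n, Measurable (t n))
    (hsum : ∀ ω : ℕ → X, Summable fun n => t n (ω n)) :
    Measurable fun ω : ℕ → X => ∑' n, t n (ω n) :=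
  measurable_of_tendsto_metrizable
    (fun _ => Finset.measurable_sum _ fun n _ => (ht n).comp (measurable_pi_apply n))
    (tendsto_pi_nhds.2 fun ω => (hsum ω).hasSum.tendsto_sum_nat)

lemma infinitePi_map_tsum_eq_conv (m : ℕ → Measure X) [∀ n, IsProbabilityMeasure (m n)]
    (ht : ∀ n, Measurable (t n)) (ht0 : ∀ n, t n 0 = 0)
    (hsum : ∀ ω : ℕ → X, Summable fun n => t n (ω n)) (k : ℕ) :
    (Measure.infinitePi m).map (fun ω => ∑' n, t n (ω n)) =
      (m k).map (t k) ∗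
        (Measure.infinitePi m).map fun ω => ∑' n, t n (Function.update ω k 0 n) := by
  have hS := measurable_tsum_apply_eval ht hsum
  have hsplit (ω : ℕ → X) :
      ∑' n, t n (ω n) = t k (ω k) + ∑' n, t n (Function.update ω k 0 n) := by
    rw [(hsum ω).tsum_eq_add_tsum_ite k]
    congr 1
    refine tsum_congr fun n => ?_
    rcases eq_or_ne n k with rfl | hnk
    · simp [ht0]
    · simp [hnk]
  have hindep := (indepFun_eval_update_infinitePi m k 0).comp (ht k) hS
  rw [funext hsplit, ← Measure.infinitePi_map_eval m k,
    Measure.map_map (ht k) (measurable_pi_apply k)]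
  exact hindep.map_add_eq_map_conv_map ((ht k).comp (measurable_pi_apply k))
    (hS.comp measurable_update_left)

theorem exists_forall_eq_conv_of_ae_norm_le [CompleteSpace X] (m : ℕ → Measure X)
    [∀ n, IsProbabilityMeasure (m n)] {ε : ℕ → ℝ} (hε : Summable ε)
    (hm : ∀ n, ∀ᵐ y ∂m n, ‖y‖ ≤ ε n) :
    ∃ ν : Measure X, IsProbabilityMeasure ν ∧
      ∀ k, ∃ ρ : Measure X, IsProbabilityMeasure ρ ∧ ν = m k ∗ ρ := by
  -- truncation makes `∑ t n (ω n)` converge for every `ω` without changing the laws `m n`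
  let t (n : ℕ) (y : X) : X := if ‖y‖ ≤ ε n then y else 0
  have ht (n : ℕ) : Measurable (t n) :=
    Measurable.ite (measurableSet_le measurable_norm measurable_const) measurable_id
      measurable_const
  have ht_norm (n : ℕ) (y : X) : ‖t n y‖ ≤ |ε n| := by
    by_cases hy : ‖y‖ ≤ ε n
    · simpa [t, hy] using hy.trans (le_abs_self _)
    · simp [t, hy]
  have hsum (ω : ℕ → X) : Summable fun n => t n (ω n) :=
    hε.abs.of_norm_bounded fun n => ht_norm n (ω n)
  have hlaw (n : ℕ) : (m n).map (t n) = m n := by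
    rw [Measure.map_congr (g := id), Measure.map_id]
    filter_upwards [hm n] with y hy
    simp [t, hy]
  have hS := measurable_tsum_apply_eval ht hsum
  let P := Measure.infinitePi m
  refine ⟨P.map fun ω => ∑' n, t n (ω n), Measure.isProbabilityMeasure_map hS.aemeasurable,
    fun k => ⟨P.map fun ω => ∑' n, t n (Function.update ω k 0 n),
      Measure.isProbabilityMeasure_map (hS.comp measurable_update_left).aemeasurable, ?_⟩⟩
  rw [infinitePi_map_tsum_eq_conv m ht (fun n => by simp [t]) hsum k, hlaw]

end Series

theorem stmt_11_general {X : Type*} [NormedAddCommGroup X] [CompleteSpace X]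
    [TopologicalSpace.SeparableSpace X] [MeasurableSpace X] [BorelSpace X]
    (A : ℕ → Set X) (hA : ∀ n, MeasurableSet (A n))
    (μ : ℕ → Measure X) (hprob : ∀ n, IsProbabilityMeasure (μ n))
    (hnull : ∀ n, ∀ x : X, μ n ((fun a => x + a) '' A n) = 0) :
    ∃ ν : Measure X, IsProbabilityMeasure ν ∧
      ∀ x : X, ν ((fun a => x + a) '' ⋃ n, A n) = 0 := by
  choose m _ hm_small hm_null using fun n =>
    exists_isProbabilityMeasure_ae_norm_le (hprob n).ne_zero (hA n) (hnull n)
      (pow_pos (one_half_pos (α := ℝ)) n)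
  obtain ⟨ν, hν, hfactor⟩ :=
    exists_forall_eq_conv_of_ae_norm_le m summable_geometric_two hm_small
  refine ⟨ν, hν, fun x => ?_⟩
  rw [image_iUnion]
  refine measure_iUnion_null fun k => ?_
  obtain ⟨ρ, hρ, hνk⟩ := hfactor k
  rw [hνk]
  exact conv_image_add_left_eq_zero (hA k) (hm_null k) x

/-- A countable union of Haar-null Borel sets in a separable Banach space is Haar-null. -/
theorem stmt_11 {X : Type*} [NormedAddCommGroup X] [NormedSpace ℝ X] [CompleteSpace X]
    [TopologicalSpace.SeparableSpace X] [MeasurableSpace X] [BorelSpace X]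
    (A : ℕ → Set X) (hA : ∀ n, MeasurableSet (A n))
    (μ : ℕ → Measure X) (hprob : ∀ n, IsProbabilityMeasure (μ n))
    (hnull : ∀ n, ∀ x : X, μ n ((fun a => x + a) '' A n) = 0) :
    ∃ ν : Measure X, IsProbabilityMeasure ν ∧
      ∀ x : X, ν ((fun a => x + a) '' ⋃ n, A n) = 0 :=
  stmt_11_general A hA μ hprob hnull
end

section
/- The norm function f(x) = ‖x‖ on ℓ¹ is nowhere Fréchet differentiable: for every x₀ ∈ ℓ¹ and every bounded linear functional φ on ℓ¹, it is not the case that ‖x₀ + u‖ - ‖x₀‖ - φ(u) = o(‖u‖) as ‖u‖ → 0. -/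
open scoped ENNReal

/-- Norm on ℓ¹ as a tsum. -/
lemma l1_norm_eq (f : lp (fun _ : ℕ => ℝ) 1) : ‖f‖ = ∑' i, |f i| := by
  have h := lp.norm_eq_tsum_rpow (p := (1 : ℝ≥0∞)) (by norm_num) f
  simpa using h

lemma l1_norm_add_single (f : lp (fun _ : ℕ => ℝ) 1) (n : ℕ) (t : ℝ) :
    ‖f + lp.single (E := fun _ : ℕ => ℝ) 1 n t‖ = ‖f‖ - |f n| + |f n + t| := by
  set s : lp (fun _ : ℕ => ℝ) 1 := lp.single (E := fun _ : ℕ => ℝ) 1 n t with hs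
  have hsum : Summable fun i => |f i| := by
    simpa using (lp.memℓp f).summable (p := (1 : ℝ≥0∞)) (by norm_num)
  have hind : Summable fun i : ℕ => if i = n then |f n + t| - |f n| else 0 :=
    (hasSum_ite_eq n _).summable
  have key : ∀ i : ℕ, |(f + s) i|
      = |f i| + (if i = n then |f n + t| - |f n| else 0) := by
    intro i
    have hfs : (f + s) i = f i + s i := rfl
    by_cases hi : i = n
    · subst hi
      have hv : s i = t := lp.single_apply_self (E := fun _ : ℕ => ℝ) 1 i t
      rw [hfs, hv]
      simp
    · have : s i = 0 := lp.single_apply_ne (E := fun _ : ℕ => ℝ) 1 n t hi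
      rw [hfs, this]
      simp [hi]
  rw [l1_norm_eq, l1_norm_eq]
  calc ∑' i, |(f + s) i|
      = ∑' i, (|f i| + (if i = n then |f n + t| - |f n| else 0)) := tsum_congr key
    _ = (∑' i, |f i|) + ∑' i, (if i = n then |f n + t| - |f n| else 0) :=
        Summable.tsum_add hsum hind
    _ = (∑' i, |f i|) - |f n| + |f n + t| := by rw [tsum_ite_eq]; ring

/-- The norm on `ℓ¹` is nowhere Fréchet differentiable. -/
theorem stmt_14 (x₀ : lp (fun _ : ℕ => ℝ) 1) (φ : lp (fun _ : ℕ => ℝ) 1 →L[ℝ] ℝ) :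
    ¬ ∀ ε > (0 : ℝ), ∃ δ > (0 : ℝ), ∀ u : lp (fun _ : ℕ => ℝ) 1,
        ‖u‖ ≤ δ → |‖x₀ + u‖ - ‖x₀‖ - φ u| ≤ ε * ‖u‖ := by
  intro h
  obtain ⟨δ, hδ, H⟩ := h (1/2) (by norm_num)
  have hsum : Summable fun i => |x₀ i| := by
    simpa using (lp.memℓp x₀).summable (p := (1 : ℝ≥0∞)) (by norm_num)
  have htend : Filter.Tendsto (fun i => |x₀ i|) Filter.atTop (nhds 0) :=
    hsum.tendsto_atTop_zero
  obtain ⟨n, hn⟩ : ∃ n, |x₀ n| < δ / 4 := by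
    rcases (htend.eventually (gt_mem_nhds (by linarith : (0:ℝ) < δ/4))).exists with ⟨n, hn⟩
    exact ⟨n, hn⟩
  set u : lp (fun _ : ℕ => ℝ) 1 := lp.single (E := fun _ : ℕ => ℝ) 1 n δ with hu
  have hnu : ‖u‖ = δ := by
    rw [hu, l1_norm_eq]
    have key : ∀ i : ℕ, |(lp.single (E := fun _ : ℕ => ℝ) 1 n δ : lp (fun _ : ℕ => ℝ) 1) i|
        = if i = n then δ else 0 := by
      intro i
      by_cases hi : i = n
      · subst hi
        rw [lp.single_apply_self (E := fun _ : ℕ => ℝ) 1 i δ]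
        simp [abs_of_pos hδ]
      · rw [lp.single_apply_ne (E := fun _ : ℕ => ℝ) 1 n δ hi]
        simp [hi]
    rw [tsum_congr key, tsum_ite_eq]
  have hnegu : x₀ + -u = x₀ + lp.single (E := fun _ : ℕ => ℝ) 1 n (-δ) := by
    rw [hu, lp.single_neg]
  have h1 : |‖x₀ + u‖ - ‖x₀‖ - φ u| ≤ 1/2 * δ := by
    have := H u (le_of_eq hnu)
    rwa [hnu] at this
  have h2 : |‖x₀ + -u‖ - ‖x₀‖ - φ (-u)| ≤ 1/2 * δ := by
    have := H (-u) (by rw [norm_neg, hnu])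
    rwa [norm_neg, hnu] at this
  have e1 : ‖x₀ + u‖ = ‖x₀‖ - |x₀ n| + |x₀ n + δ| := l1_norm_add_single x₀ n δ
  have e2 : ‖x₀ + -u‖ = ‖x₀‖ - |x₀ n| + |x₀ n + -δ| := by
    rw [hnegu]; exact l1_norm_add_single x₀ n (-δ)
  have habs : |x₀ n + δ| + |x₀ n + -δ| = 2 * δ := by
    have h1' : |x₀ n| < δ := by linarith
    rcases abs_lt.mp h1' with ⟨ha, hb⟩
    rw [abs_of_pos (by linarith), abs_of_neg (by linarith)]
    ring
  have hphi : φ (-u) = -φ u := map_neg φ u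
  rw [e1] at h1
  rw [e2, hphi] at h2
  have a1 := abs_le.mp h1
  have a2 := abs_le.mp h2
  linarith [a1.1, a1.2, a2.1, a2.2]
end

section
/- If f : X → Y is a uniform quotient map between Banach spaces (uniformly continuous, and there is φ with φ(r) > 0 for r > 0 and f(B_X(x, r)) ⊇ B_Y(f(x), φ(r)) for all x, r), then f is surjective and 'co-Lipschitz for large distances': for every r₀ > 0 there is c > 0 such that f(B_X(x, r)) ⊇ B_Y(f(x), c·r) for all x ∈ X and all r ≥ r₀. -/
/-- Chaining lemma: iterating the co-uniform condition along a segment in `Y`. -/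
lemma chain_key {X Y : Type*} [NormedAddCommGroup X] [NormedSpace ℝ X]
    [NormedAddCommGroup Y] [NormedSpace ℝ Y]
    (f : X → Y) (r₀ φ₀ : ℝ) (hr : 0 < r₀) (hφ₀ : 0 < φ₀)
    (h : ∀ x : X, Metric.ball (f x) φ₀ ⊆ f '' Metric.ball x r₀) :
    ∀ n : ℕ, ∀ (x : X) (y : Y), dist y (f x) < n * φ₀ →
      ∃ x', dist x' x < n * r₀ ∧ f x' = y := by
  intro n
  induction n with
  | zero =>
    intro x y hy
    simp only [Nat.cast_zero, zero_mul] at hy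
    exact absurd hy (not_lt.2 dist_nonneg)
  | succ n ih =>
    intro x y hy
    set d := dist y (f x) with hd_def
    have hd0 : 0 ≤ d := dist_nonneg
    by_cases hd : d < φ₀
    · obtain ⟨x', hx', hfx'⟩ := h x (by simpa [Metric.mem_ball] using hd)
      refine ⟨x', lt_of_lt_of_le (by simpa [Metric.mem_ball] using hx') ?_, hfx'⟩
      push_cast
      nlinarith [Nat.cast_nonneg (α := ℝ) n]
    · push_neg at hd
      have hdpos : 0 < d := lt_of_lt_of_le hφ₀ hd
      have hlt : d < ((n : ℝ) + 1) * φ₀ := by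
        have := hy
        push_cast at this
        linarith
      set a : ℝ := (max (d - n * φ₀) 0 + φ₀) / 2 with ha_def
      have hmax_lt : max (d - n * φ₀) 0 < φ₀ := by
        apply max_lt
        · linarith
        · exact hφ₀
      have ha_pos : 0 < a := by
        have := le_max_right (d - n * φ₀) 0
        simp only [ha_def]
        linarith
      have ha_lt : a < φ₀ := by
        simp only [ha_def]; linarith
      have ha_gt : d - n * φ₀ < a := by
        have := le_max_left (d - n * φ₀) 0
        simp only [ha_def]; linarith
      have ha_le : a ≤ d := by
        have h1 : max (d - n * φ₀) 0 ≤ d := by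
          apply max_le
          · nlinarith [Nat.cast_nonneg (α := ℝ) n]
          · exact hd0
        simp only [ha_def]; linarith
      set t : ℝ := a / d with ht_def
      have ht_pos : 0 < t := div_pos ha_pos hdpos
      have ht_le : t ≤ 1 := (div_le_one hdpos).2 ha_le
      set y' : Y := f x + t • (y - f x) with hy'_def
      have hnorm : ‖y - f x‖ = d := by rw [hd_def, dist_eq_norm]
      have hdist_y' : dist y' (f x) = a := by
        rw [hy'_def, dist_eq_norm]
        simp only [add_sub_cancel_left]
        rw [norm_smul, Real.norm_eq_abs, abs_of_pos ht_pos, hnorm, ht_def,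
          div_mul_cancel₀ _ (ne_of_gt hdpos)]
      obtain ⟨x₁, hx₁, hfx₁⟩ := h x (show y' ∈ Metric.ball (f x) φ₀ from by
        rw [Metric.mem_ball, hdist_y']; exact ha_lt)
      have hx₁ball : dist x₁ x < r₀ := by simpa [Metric.mem_ball] using hx₁
      have hdist_yy' : dist y (f x₁) < n * φ₀ := by
        rw [hfx₁]
        have hsub : y - y' = (1 - t) • (y - f x) := by
          rw [hy'_def, sub_smul, one_smul]; abel
        rw [dist_eq_norm, hsub, norm_smul, Real.norm_eq_abs,
          abs_of_nonneg (by linarith : (0:ℝ) ≤ 1 - t), hnorm]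
        have : (1 - t) * d = d - a := by
          rw [ht_def]; field_simp
        rw [this]
        linarith
      obtain ⟨x', hx', hfx'⟩ := ih x₁ y hdist_yy'
      refine ⟨x', ?_, hfx'⟩
      have := dist_triangle x' x₁ x
      push_cast
      linarith

/-- A uniform quotient map between Banach spaces is surjective and co-Lipschitz for large
distances. -/
theorem stmt_19 {X Y : Type*} [NormedAddCommGroup X] [NormedSpace ℝ X] [CompleteSpace X]
    [NormedAddCommGroup Y] [NormedSpace ℝ Y] [CompleteSpace Y]
    (f : X → Y) (hf : UniformContinuous f) (φ : ℝ → ℝ)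
    (hφ : ∀ r > (0 : ℝ), 0 < φ r)
    (hco : ∀ (x : X) (r : ℝ), 0 < r → Metric.ball (f x) (φ r) ⊆ f '' Metric.ball x r) :
    Function.Surjective f ∧
    ∀ r₀ > (0 : ℝ), ∃ c > (0 : ℝ), ∀ (x : X) (r : ℝ), r₀ ≤ r →
      Metric.ball (f x) (c * r) ⊆ f '' Metric.ball x r := by
  constructor
  · -- surjectivity
    intro y
    have hφ1 : 0 < φ 1 := hφ 1 one_pos
    have key := chain_key f 1 (φ 1) one_pos hφ1 (fun x => hco x 1 one_pos)
    obtain ⟨n, hn⟩ := exists_nat_gt (dist y (f 0) / φ 1)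
    have hlt : dist y (f 0) < n * φ 1 := by
      rw [div_lt_iff₀ hφ1] at hn
      linarith
    obtain ⟨x', _, hfx'⟩ := key n 0 y hlt
    exact ⟨x', hfx'⟩
  · intro r₀ hr₀
    have hφ0 : 0 < φ r₀ := hφ r₀ hr₀
    refine ⟨φ r₀ / (2 * r₀), by positivity, ?_⟩
    intro x r hr y hy
    have hrpos : 0 < r := lt_of_lt_of_le hr₀ hr
    have key := chain_key f r₀ (φ r₀) hr₀ hφ0 (fun x => hco x r₀ hr₀)
    set n : ℕ := ⌊r / r₀⌋₊ with hn_def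
    have hn1 : 1 ≤ n := by
      rw [hn_def]
      exact Nat.le_floor (by rw [Nat.cast_one, le_div_iff₀ hr₀]; linarith)
    have hn_le : (n : ℝ) * r₀ ≤ r := by
      have := Nat.floor_le (by positivity : (0:ℝ) ≤ r / r₀)
      rw [hn_def]
      calc (⌊r / r₀⌋₊ : ℝ) * r₀ ≤ (r / r₀) * r₀ := by nlinarith
        _ = r := by field_simp
    have hn_ge : r / (2 * r₀) ≤ (n : ℝ) := by
      by_cases hc : r ≤ 2 * r₀
      · have : r / (2 * r₀) ≤ 1 := by
          rw [div_le_one (by positivity)]; linarith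
        calc r / (2 * r₀) ≤ 1 := this
          _ ≤ (n : ℝ) := by exact_mod_cast hn1
      · push_neg at hc
        have h1 : r / r₀ - 1 < (⌊r / r₀⌋₊ : ℝ) := Nat.sub_one_lt_floor _
        have hu : 2 < r / r₀ := by rw [lt_div_iff₀ hr₀]; linarith
        have h2 : r / (2 * r₀) ≤ r / r₀ - 1 := by
          have he : r / (2 * r₀) = (r / r₀) / 2 := by
            rw [div_div]; ring_nf
          rw [he]; linarith
        rw [hn_def]; linarith
    have hdist : dist y (f x) < n * φ r₀ := by
      have h1 : dist y (f x) < φ r₀ / (2 * r₀) * r := by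
        simpa [Metric.mem_ball] using hy
      have h2 : φ r₀ / (2 * r₀) * r = φ r₀ * (r / (2 * r₀)) := by ring
      have h3 : φ r₀ * (r / (2 * r₀)) ≤ φ r₀ * n := by nlinarith
      linarith [h1, h2 ▸ h1]
    obtain ⟨x', hx', hfx'⟩ := key n x y hdist
    exact ⟨x', by simpa [Metric.mem_ball] using lt_of_lt_of_le hx' hn_le, hfx'⟩
end
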